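/- Never-taker potential-outcome means: under Independence and Monotonicity, for each wave w with P(T_w = 0, Z = 1) > 0, E[Y_w(0) | T_w(1) = T_w(0) = 0] = E[Y_w | T_w = 0, Z = 1]; moreover, if additionally IMCO holds, then for each t ∈ {1,...,w−1} with P(T_w = t, Z = 1) > 0, E[Y_w(t) | T_w(1) = T_w(0) = t] = E[Y_w | T_w = t, Z = 1]. -/

import Mathlib

/-!
On `{Z = 1}` the observed exposure and outcome are `T_w(1)` and `Y_w(T_w(1))`, so the right-hand
side is the mean of `Y_w(t)` over `{T_w(1) = t} ∩ {Z = 1}`. Since `(Y_w, T_w(1), T_w(0))` is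
independent of `Z`, its law under `P[·|Z = 1]` is its law under `P`, and the conditioning on
`Z = 1` can be dropped. Finally the stratum `{T_w(1) = T_w(0) = t}` agrees almost surely with
`{T_w(1) = t}`: for `t = 0` by monotonicity, and for `0 < t < w` because by IMCO a unit with
`T_w(0) < T_w(1)` has `T_w(1) = w`.
-/

open MeasureTheory ProbabilityTheory Finset

/-- Conditional mean `E[X | A]`: the expectation of `X` under `P` conditioned on the event `A`. -/
noncomputable def cmean {Ω : Type*} [MeasurableSpace Ω] (P : MeasureTheory.Measure Ω)
    (A : Set Ω) (X : Ω → ℝ) : ℝ :=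
  ∫ ω, X ω ∂(P[|A])

namespace ProbabilityTheory

variable {Ω α β : Type*} [MeasurableSpace Ω] [MeasurableSpace α] [MeasurableSpace β]

lemma map_cond_preimage (μ : Measure Ω) {X : Ω → α} (hX : Measurable X) {B : Set α}
    (hB : MeasurableSet B) : (μ[|X ⁻¹' B]).map X = (μ.map X)[|B] := by
  rw [cond, cond, Measure.map_smul, ← Measure.restrict_map hX hB, Measure.map_apply hX hB]

lemma IndepFun.map_cond_preimage_eq_map {P : Measure Ω} [IsFiniteMeasure P] {X : Ω → α}
    {Z : Ω → β} (hXZ : IndepFun X Z P) (hX : Measurable X) (hZ : Measurable Z) {C : Set β}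
    (hC : MeasurableSet C) (hPC : P (Z ⁻¹' C) ≠ 0) : (P[|Z ⁻¹' C]).map X = P.map X := by
  ext B hB
  rw [Measure.map_apply hX hB, Measure.map_apply hX hB, cond_apply (hZ hC),
    hXZ.symm.measure_inter_preimage_eq_mul C B hC hB,
    ENNReal.inv_mul_cancel_left hPC (measure_ne_top P _)]

lemma IndepFun.map_cond_preimage_inter {P : Measure Ω} [IsFiniteMeasure P] {X : Ω → α}
    {Z : Ω → β} (hXZ : IndepFun X Z P) (hX : Measurable X) (hZ : Measurable Z) {B : Set α}
    (hB : MeasurableSet B) {C : Set β} (hC : MeasurableSet C) (hPC : P (Z ⁻¹' C) ≠ 0) :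
    (P[|X ⁻¹' B ∩ Z ⁻¹' C]).map X = (P[|X ⁻¹' B]).map X := by
  rw [Set.inter_comm, ← cond_cond_eq_cond_inter (hZ hC) (hX hB), map_cond_preimage _ hX hB,
    map_cond_preimage _ hX hB, hXZ.map_cond_preimage_eq_map hX hZ hC hPC]

end ProbabilityTheory

section

variable {Ω α β : Type*} [MeasurableSpace Ω] [MeasurableSpace α] [MeasurableSpace β]

lemma cmean_preimage_inter_of_indepFun {P : Measure Ω} [IsFiniteMeasure P] {X : Ω → α}
    {Z : Ω → β} (hXZ : IndepFun X Z P) (hX : Measurable X) (hZ : Measurable Z) {g : α → ℝ}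
    (hg : Measurable g) {B : Set α} (hB : MeasurableSet B) {C : Set β} (hC : MeasurableSet C)
    (hPC : P (Z ⁻¹' C) ≠ 0) :
    cmean P (X ⁻¹' B ∩ Z ⁻¹' C) (fun ω => g (X ω)) = cmean P (X ⁻¹' B) (fun ω => g (X ω)) := by
  rw [cmean, cmean, ← integral_map hX.aemeasurable hg.aestronglyMeasurable,
    ← integral_map hX.aemeasurable hg.aestronglyMeasurable,
    hXZ.map_cond_preimage_inter hX hZ hB hC hPC]

lemma cmean_congr_ae_set {P : Measure Ω} {A B : Set Ω} (h : A =ᵐ[P] B) (X : Ω → ℝ) :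
    cmean P A X = cmean P B X := by
  rw [cmean, cmean, ProbabilityTheory.cond, ProbabilityTheory.cond, measure_congr h,
    Measure.restrict_congr_set h]

lemma cmean_congr {P : Measure Ω} {A : Set Ω} (hA : MeasurableSet A) {X X' : Ω → ℝ}
    (h : ∀ ω ∈ A, X ω = X' ω) : cmean P A X = cmean P A X' :=
  integral_congr_ae <| (ae_cond_mem hA).mono h

lemma cmean_stratum_eq_cmean_treated {P : Measure Ω} [IsFiniteMeasure P] {Z : Ω → ℕ}
    (hZ : Measurable Z) (hZ1 : P {ω | Z ω = 1} ≠ 0) {T : ℕ → Ω → ℕ} (hT1 : Measurable (T 1))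
    (hT0 : Measurable (T 0)) {Y : ℕ → Ω → ℝ} (hY : ∀ t, Measurable (Y t))
    (hInd : IndepFun (fun ω => ((fun t : ℕ => Y t ω), T 1 ω, T 0 ω)) Z P) {t : ℕ}
    (hstratum : ∀ᵐ ω ∂P, T 1 ω = t → T 0 ω = t) :
    cmean P {ω | T 1 ω = t ∧ T 0 ω = t} (fun ω => Y t ω)
      = cmean P {ω | T (Z ω) ω = t ∧ Z ω = 1} (fun ω => Y (T (Z ω) ω) ω) := by
  set W := fun ω => ((fun t : ℕ => Y t ω), T 1 ω, T 0 ω)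
  have hW : Measurable W := by fun_prop
  have hB : MeasurableSet {p : (ℕ → ℝ) × ℕ × ℕ | p.2.1 = t} :=
    measurableSet_eq_fun (by fun_prop) measurable_const
  have hobserved : {ω | T (Z ω) ω = t ∧ Z ω = 1}
      = W ⁻¹' {p | p.2.1 = t} ∩ Z ⁻¹' {1} := by
    ext ω
    refine ⟨fun ⟨hT, hZω⟩ => ⟨show T 1 ω = t from hZω ▸ hT, hZω⟩, fun ⟨hT, hZω⟩ => ?_⟩
    change T 1 ω = t at hT
    change Z ω = 1 at hZω
    exact ⟨hZω ▸ hT, hZω⟩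
  calc cmean P {ω | T 1 ω = t ∧ T 0 ω = t} (fun ω => Y t ω)
      = cmean P (W ⁻¹' {p | p.2.1 = t}) (fun ω => (W ω).1 t) := by
        refine cmean_congr_ae_set ?_ _
        filter_upwards [hstratum] with ω hω
        exact propext ⟨And.left, fun h => ⟨h, hω h⟩⟩
    _ = cmean P (W ⁻¹' {p | p.2.1 = t} ∩ Z ⁻¹' {1}) (fun ω => (W ω).1 t) :=
        (cmean_preimage_inter_of_indepFun hInd hW hZ
          ((measurable_pi_apply t).comp measurable_fst) hB (measurableSet_singleton 1) hZ1).symm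
    _ = cmean P {ω | T (Z ω) ω = t ∧ Z ω = 1} (fun ω => Y (T (Z ω) ω) ω) := by
        rw [hobserved]
        refine cmean_congr ((hW hB).inter (hZ (measurableSet_singleton 1))) ?_
        rintro ω ⟨hT, hZω⟩
        change T 1 ω = t at hT
        change Z ω = 1 at hZω
        change Y t ω = Y (T (Z ω) ω) ω
        rw [hZω, hT]

end

theorem never_taker_and_disaggregated_always_taker_means_general
    {Ω : Type*} [MeasurableSpace Ω] (P : MeasureTheory.Measure Ω) [IsProbabilityMeasure P]
    (Z : Ω → ℕ) (hZmeas : Measurable Z)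
    (hZpos : 0 < P {ω | Z ω = 1})
    (wbar : ℕ)
    (T : ℕ → ℕ → Ω → ℕ) (hTmeas : ∀ w z, Measurable (T w z))
    (Y : ℕ → ℕ → Ω → ℝ) (hYmeas : ∀ w t, Measurable (Y w t))
    (hIndep : ∀ w ∈ Set.Icc 1 wbar,
      IndepFun (fun ω => ((fun t : ℕ => Y w t ω), T w 1 ω, T w 0 ω)) Z P)
    (hMono : ∀ w ∈ Set.Icc 1 wbar, ∀ᵐ ω ∂P, T w 0 ω ≤ T w 1 ω) :
    ∀ w ∈ Set.Icc 1 wbar,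
      (0 < P {ω | T w (Z ω) ω = 0 ∧ Z ω = 1} →
        cmean P {ω | T w 1 ω = 0 ∧ T w 0 ω = 0} (fun ω => Y w 0 ω)
          = cmean P {ω | T w (Z ω) ω = 0 ∧ Z ω = 1} (fun ω => Y w (T w (Z ω) ω) ω)) ∧
      ((∀ v ∈ Set.Icc 1 wbar, ∀ᵐ ω ∂P, T v 0 ω < T v 1 ω → T v 1 ω = v) →
        ∀ t, 1 ≤ t → t < w →
          0 < P {ω | T w (Z ω) ω = t ∧ Z ω = 1} →
          cmean P {ω | T w 1 ω = t ∧ T w 0 ω = t} (fun ω => Y w t ω)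
            = cmean P {ω | T w (Z ω) ω = t ∧ Z ω = 1} (fun ω => Y w (T w (Z ω) ω) ω)) := by
  intro w hw
  have stratum_mean {t : ℕ} (hstratum : ∀ᵐ ω ∂P, T w 1 ω = t → T w 0 ω = t) :=
    cmean_stratum_eq_cmean_treated hZmeas hZpos.ne' (hTmeas w 1) (hTmeas w 0) (hYmeas w)
      (hIndep w hw) hstratum
  refine ⟨fun _ => stratum_mean ?_, fun hIMCO t _ htw _ => stratum_mean ?_⟩
  · filter_upwards [hMono w hw] with ω hmono hT1
    omega
  · filter_upwards [hMono w hw, hIMCO w hw] with ω hmono himco hT1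
    by_contra hT0
    have := himco (by omega)
    omega

theorem never_taker_and_disaggregated_always_taker_means
    {Ω : Type*} [MeasurableSpace Ω] (P : MeasureTheory.Measure Ω) [IsProbabilityMeasure P]
    (Z : Ω → ℕ) (hZmeas : Measurable Z) (hZbin : ∀ ω, Z ω ≤ 1)
    (hZpos : 0 < P {ω | Z ω = 1}) (hZlt : P {ω | Z ω = 1} < 1)
    (wbar : ℕ) (hwbar : 1 ≤ wbar)
    (T : ℕ → ℕ → Ω → ℕ) (hTmeas : ∀ w z, Measurable (T w z))
    (hTrange : ∀ w ∈ Set.Icc 1 wbar, ∀ z ≤ 1, ∀ ω, T w z ω ≤ w)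
    (Y : ℕ → ℕ → Ω → ℝ) (hYmeas : ∀ w t, Measurable (Y w t))
    (hYint : ∀ w ∈ Set.Icc 1 wbar, ∀ t ≤ w, MeasureTheory.Integrable (Y w t) P)
    (hIndep : ∀ w ∈ Set.Icc 1 wbar,
      IndepFun (fun ω => ((fun t : ℕ => Y w t ω), T w 1 ω, T w 0 ω)) Z P)
    (hMono : ∀ w ∈ Set.Icc 1 wbar, ∀ᵐ ω ∂P, T w 0 ω ≤ T w 1 ω) :
    ∀ w ∈ Set.Icc 1 wbar,
      (0 < P {ω | T w (Z ω) ω = 0 ∧ Z ω = 1} →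
        cmean P {ω | T w 1 ω = 0 ∧ T w 0 ω = 0} (fun ω => Y w 0 ω)
          = cmean P {ω | T w (Z ω) ω = 0 ∧ Z ω = 1} (fun ω => Y w (T w (Z ω) ω) ω)) ∧
      ((∀ v ∈ Set.Icc 1 wbar, ∀ᵐ ω ∂P, T v 0 ω < T v 1 ω → T v 1 ω = v) →
        ∀ t, 1 ≤ t → t < w →
          0 < P {ω | T w (Z ω) ω = t ∧ Z ω = 1} →
          cmean P {ω | T w 1 ω = t ∧ T w 0 ω = t} (fun ω => Y w t ω)
            = cmean P {ω | T w (Z ω) ω = t ∧ Z ω = 1} (fun ω => Y w (T w (Z ω) ω) ω)) :=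
  never_taker_and_disaggregated_always_taker_means_general P Z hZmeas hZpos wbar T hTmeas Y hYmeas
    hIndep hMono
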